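/- Let φ be C¹, |φ'| ≤ λ on [α,β], s ∈ (0,1]. For the D1Q2 scheme one has the identity for the equilibrium gap propagation: φ(u_j^{n+1}) − v_j^{n+1} = (1−s)(φ(u_j^n) − v_j^n) + (φ'(ζ_j) − λ)(f^{+,n+1/2}_{j−1} − f^{+,n+1/2}_j) + (φ'(ζ_j) + λ)(f^{−,n+1/2}_{j+1} − f^{−,n+1/2}_j) for some ζ_j between u_j^n and u_j^{n+1} (ζ_j ∈ (α,β)), and consequently |φ(u_j^{n+1}) − v_j^{n+1}| ≤ (1−s)|φ(u_j^n) − v_j^n| + 2λ(|f^{+,n+1/2}_{j−1} − f^{+,n+1/2}_j| + |f^{−,n+1/2}_{j+1} − f^{−,n+1/2}_j|). -/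

import Mathlib

/-!
The collision step preserves the moments `u = f⁺ + f⁻` and relaxes `v = λ (f⁺ - f⁻)` towards
`φ(u)` at rate `s`, because the equilibria satisfy `h⁺ + h⁻ = ξ` and `λ (h⁺ - h⁻) = φ(ξ)`.
Writing the transported moments `u^{n+1}`, `v^{n+1}` through the post-collision populations and
expanding `φ(u^{n+1}) = φ(u^n) + φ'(ζ)(u^{n+1} - u^n)` by the mean value theorem, the gap identity
is linear algebra. Since `ζ` lies between two iterates, `ζ ∈ [α, β]`, so `|φ'(ζ) ∓ λ| ≤ 2λ`,
and the estimate is the triangle inequality.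
-/

/-- Equilibrium distribution function for velocity `+λ`. -/
noncomputable def hp (lam : ℝ) (flux : ℝ → ℝ) (ξ : ℝ) : ℝ := (lam * ξ + flux ξ) / (2 * lam)

/-- Equilibrium distribution function for velocity `-λ`. -/
noncomputable def hm (lam : ℝ) (flux : ℝ → ℝ) (ξ : ℝ) : ℝ := (lam * ξ - flux ξ) / (2 * lam)

theorem exists_mem_uIcc_sub_eq_deriv_mul {f : ℝ → ℝ} (hf : Differentiable ℝ f) (a b : ℝ) :
    ∃ c ∈ Set.uIcc a b, f b - f a = deriv f c * (b - a) := by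
  wlog hab : a ≤ b generalizing a b
  · obtain ⟨c, hc, hfc⟩ := this b a (le_of_not_ge hab)
    exact ⟨c, Set.uIcc_comm a b ▸ hc, by linarith⟩
  rcases hab.eq_or_lt with rfl | hlt
  · exact ⟨a, Set.left_mem_uIcc, by ring⟩
  obtain ⟨c, hc, hslope⟩ :=
    exists_deriv_eq_slope f hlt hf.continuous.continuousOn hf.differentiableOn
  refine ⟨c, Set.Icc_subset_uIcc (Set.Ioo_subset_Icc_self hc), ?_⟩
  rw [hslope, div_mul_cancel₀ _ (sub_ne_zero.2 hlt.ne')]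

section Equilibrium

variable {lam : ℝ} (flux : ℝ → ℝ) (ξ : ℝ)

theorem hp_add_hm (hlam : lam ≠ 0) : hp lam flux ξ + hm lam flux ξ = ξ := by
  rw [hp, hm]
  field_simp
  ring

theorem mul_hp_sub_hm (hlam : lam ≠ 0) : lam * (hp lam flux ξ - hm lam flux ξ) = flux ξ := by
  rw [hp, hm]
  field_simp
  ring

end Equilibrium

theorem abs_relax_add_mul_add_mul_le {c lam s x y z : ℝ} (hc : |c| ≤ lam) (hs : s ≤ 1) :
    |(1 - s) * x + (c - lam) * y + (c + lam) * z|
      ≤ (1 - s) * |x| + 2 * lam * (|y| + |z|) := by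
  obtain ⟨hc₁, hc₂⟩ := abs_le.1 hc
  have hminus : |c - lam| ≤ 2 * lam := abs_le.2 ⟨by linarith, by linarith⟩
  have hplus : |c + lam| ≤ 2 * lam := abs_le.2 ⟨by linarith, by linarith⟩
  calc |(1 - s) * x + (c - lam) * y + (c + lam) * z|
      ≤ |(1 - s) * x| + |(c - lam) * y| + |(c + lam) * z| := abs_add_three _ _ _
    _ = (1 - s) * |x| + |c - lam| * |y| + |c + lam| * |z| := by
      rw [abs_mul, abs_mul, abs_mul, abs_of_nonneg (sub_nonneg.2 hs)]
    _ ≤ (1 - s) * |x| + 2 * lam * |y| + 2 * lam * |z| := by gcongr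
    _ = (1 - s) * |x| + 2 * lam * (|y| + |z|) := by ring

theorem stmt19_general (flux : ℝ → ℝ) (hflux : ContDiff ℝ 1 flux)
    (α β lam s : ℝ) (hlampos : 0 < lam)
    (hs : s ∈ Set.Ioc (0 : ℝ) 1)
    (hφ' : ∀ ξ ∈ Set.Icc α β, |deriv flux ξ| ≤ lam)
    (fp fm fhp fhm u v : ℕ → ℤ → ℝ)
    (hu : ∀ n j, u n j = fp n j + fm n j)
    (hv : ∀ n j, v n j = lam * (fp n j - fm n j))
    (hfhp : ∀ n j, fhp n j = (1 - s) * fp n j + s * hp lam flux (u n j))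
    (hfhm : ∀ n j, fhm n j = (1 - s) * fm n j + s * hm lam flux (u n j))
    (htrp : ∀ n j, fp (n + 1) j = fhp n (j - 1))
    (htrm : ∀ n j, fm (n + 1) j = fhm n (j + 1))
    (hrange : ∀ n j, u n j ∈ Set.Icc α β) :
    ∀ n : ℕ, ∀ j : ℤ,
      (∃ ζ ∈ Set.uIcc (u n j) (u (n + 1) j),
        flux (u (n + 1) j) - v (n + 1) j
          = (1 - s) * (flux (u n j) - v n j)
            + (deriv flux ζ - lam) * (fhp n (j - 1) - fhp n j)
            + (deriv flux ζ + lam) * (fhm n (j + 1) - fhm n j)) ∧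
      |flux (u (n + 1) j) - v (n + 1) j| ≤
        (1 - s) * |flux (u n j) - v n j|
          + 2 * lam * (|fhp n (j - 1) - fhp n j| + |fhm n (j + 1) - fhm n j|) := by
  intro n j
  have hmass : fhp n j + fhm n j = u n j := by
    rw [hfhp, hfhm]
    linear_combination s * hp_add_hm flux (u n j) hlampos.ne' + (1 - s) * (hu n j).symm
  have hmomentum : lam * (fhp n j - fhm n j) = (1 - s) * v n j + s * flux (u n j) := by
    rw [hfhp, hfhm, hv]
    linear_combination s * mul_hp_sub_hm flux (u n j) hlampos.ne'
  have hu' : u (n + 1) j = fhp n (j - 1) + fhm n (j + 1) := by rw [hu, htrp, htrm]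
  have hv' : v (n + 1) j = lam * (fhp n (j - 1) - fhm n (j + 1)) := by rw [hv, htrp, htrm]
  obtain ⟨ζ, hζ, hmvt⟩ :=
    exists_mem_uIcc_sub_eq_deriv_mul (hflux.differentiable one_ne_zero) (u n j) (u (n + 1) j)
  have hgap : flux (u (n + 1) j) - v (n + 1) j
      = (1 - s) * (flux (u n j) - v n j)
        + (deriv flux ζ - lam) * (fhp n (j - 1) - fhp n j)
        + (deriv flux ζ + lam) * (fhm n (j + 1) - fhm n j) := by
    rw [hv']
    linear_combination hmvt + deriv flux ζ * (hu' + hmass) - hmomentum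
  have hζαβ : ζ ∈ Set.Icc α β :=
    Set.ordConnected_Icc.uIcc_subset (hrange n j) (hrange (n + 1) j) hζ
  exact ⟨⟨ζ, hζ, hgap⟩, hgap ▸ abs_relax_add_mul_add_mul_le (hφ' ζ hζαβ) hs.2⟩

/-- Propagation identity and estimate for the equilibrium gap of the D1Q2 scheme. -/
theorem stmt19 (flux : ℝ → ℝ) (hflux : ContDiff ℝ 1 flux)
    (α β lam s : ℝ) (hαβ : α ≤ β) (hlampos : 0 < lam)
    (hs : s ∈ Set.Ioc (0 : ℝ) 1)
    (hφ' : ∀ ξ ∈ Set.Icc α β, |deriv flux ξ| ≤ lam)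
    (fp fm fhp fhm u v : ℕ → ℤ → ℝ)
    (hu : ∀ n j, u n j = fp n j + fm n j)
    (hv : ∀ n j, v n j = lam * (fp n j - fm n j))
    (hfhp : ∀ n j, fhp n j = (1 - s) * fp n j + s * hp lam flux (u n j))
    (hfhm : ∀ n j, fhm n j = (1 - s) * fm n j + s * hm lam flux (u n j))
    (htrp : ∀ n j, fp (n + 1) j = fhp n (j - 1))
    (htrm : ∀ n j, fm (n + 1) j = fhm n (j + 1))
    (hrange : ∀ n j, u n j ∈ Set.Icc α β) :
    ∀ n : ℕ, ∀ j : ℤ,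
      (∃ ζ ∈ Set.uIcc (u n j) (u (n + 1) j),
        flux (u (n + 1) j) - v (n + 1) j
          = (1 - s) * (flux (u n j) - v n j)
            + (deriv flux ζ - lam) * (fhp n (j - 1) - fhp n j)
            + (deriv flux ζ + lam) * (fhm n (j + 1) - fhm n j)) ∧
      |flux (u (n + 1) j) - v (n + 1) j| ≤
        (1 - s) * |flux (u n j) - v n j|
          + 2 * lam * (|fhp n (j - 1) - fhp n j| + |fhm n (j + 1) - fhm n j|) :=
  stmt19_general flux hflux α β lam s hlampos hs hφ' fp fm fhp fhm u v hu hv hfhp hfhm htrp htrm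
    hrange
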